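/- Let N be a positive integer, L > 0, and x, y ∈ ℝ^N satisfy x_n² + y_n² ≤ L²/2 for all n. Assume var(x) > 0, var(y) > 0 and var(x)·var(y) > cov(x,y)². Then 1/(var(x) − cov(x,y)²/var(y)) + 1/(var(y) − cov(x,y)²/var(x)) ≥ 8/L², and equality holds if and only if cov(x,y) = 0, var(x) = var(y), μ(x) = μ(y) = 0, and x_n² + y_n² = L²/2 for every n. -/

import Mathlib

/-- Mean of a real vector. -/
noncomputable def mean {N : ℕ} (x : Fin N → ℝ) : ℝ := (∑ n, x n) / N

/-- Variance of a real vector. -/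
noncomputable def variance {N : ℕ} (x : Fin N → ℝ) : ℝ :=
  (∑ n, (x n - mean x) ^ 2) / N

/-- Covariance of two real vectors. -/
noncomputable def covar {N : ℕ} (x y : Fin N → ℝ) : ℝ :=
  (∑ n, (x n - mean x) * (y n - mean y)) / N

lemma var_eq (N : ℕ) (hN : 0 < N) (x : Fin N → ℝ) :
    variance x = (∑ n, x n ^ 2) / N - mean x ^ 2 := by
  have hn : (N : ℝ) ≠ 0 := Nat.cast_ne_zero.mpr hN.ne'
  have hsum : ∑ n, x n = N * mean x := by unfold mean; field_simp
  unfold variance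
  have h : ∑ n, (x n - mean x) ^ 2
      = ∑ n, x n ^ 2 - 2 * mean x * (∑ n, x n) + N * mean x ^ 2 := by
    have h1 : ∀ n : Fin N, (x n - mean x) ^ 2
        = x n ^ 2 - 2 * mean x * x n + mean x ^ 2 := by intro n; ring
    rw [Finset.sum_congr rfl (fun n _ => h1 n), Finset.sum_add_distrib,
      Finset.sum_sub_distrib, ← Finset.mul_sum, Finset.sum_const,
      Finset.card_univ, Fintype.card_fin, nsmul_eq_mul]
  rw [h, hsum]
  field_simp
  ring

set_option maxHeartbeats 1000000 in
/-- If `x_n² + y_n² ≤ L²/2` for all `n`, with `var(x), var(y) > 0` and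
`var(x)·var(y) > cov(x,y)²`, then
`1/(var(x) − cov²/var(y)) + 1/(var(y) − cov²/var(x)) ≥ 8/L²`, with equality iff
`cov(x,y) = 0`, `var(x) = var(y)`, `μ(x) = μ(y) = 0`, and `x_n² + y_n² = L²/2` for all `n`. -/
theorem stmt2 (N : ℕ) (hN : 0 < N) (L : ℝ) (hL : 0 < L) (x y : Fin N → ℝ)
    (hbox : ∀ n, x n ^ 2 + y n ^ 2 ≤ L ^ 2 / 2)
    (hvx : 0 < variance x) (hvy : 0 < variance y)
    (hvc : covar x y ^ 2 < variance x * variance y) :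
    8 / L ^ 2 ≤
        1 / (variance x - covar x y ^ 2 / variance y) +
          1 / (variance y - covar x y ^ 2 / variance x) ∧
      (1 / (variance x - covar x y ^ 2 / variance y) +
            1 / (variance y - covar x y ^ 2 / variance x) = 8 / L ^ 2 ↔
        covar x y = 0 ∧ variance x = variance y ∧ mean x = 0 ∧ mean y = 0 ∧
          ∀ n, x n ^ 2 + y n ^ 2 = L ^ 2 / 2) := by
  have hn : (0:ℝ) < N := Nat.cast_pos.mpr hN
  set a := variance x with ha
  set b := variance y with hb
  set c := covar x y with hc
  clear_value a b c
  have hsum_le : ∑ n, (x n ^ 2 + y n ^ 2) ≤ ∑ _n : Fin N, L ^ 2 / 2 :=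
    Finset.sum_le_sum (fun n _ => hbox n)
  have hconstsum : ∑ _n : Fin N, L ^ 2 / 2 = N * (L ^ 2 / 2) := by
    rw [Finset.sum_const, Finset.card_univ, Fintype.card_fin, nsmul_eq_mul]
  have hvarx : a = (∑ n, x n ^ 2) / N - mean x ^ 2 := by rw [ha]; exact var_eq N hN x
  have hvary : b = (∑ n, y n ^ 2) / N - mean y ^ 2 := by rw [hb]; exact var_eq N hN y
  have hsplit : ∑ n, (x n ^ 2 + y n ^ 2) = ∑ n, x n ^ 2 + ∑ n, y n ^ 2 :=
    Finset.sum_add_distrib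
  have key : a + b = (∑ n, (x n ^ 2 + y n ^ 2)) / N - mean x ^ 2 - mean y ^ 2 := by
    rw [hvarx, hvary, hsplit, add_div]; ring
  have hS_le : (∑ n, (x n ^ 2 + y n ^ 2)) / N ≤ L ^ 2 / 2 := by
    rw [div_le_iff₀ hn]
    calc ∑ n, (x n ^ 2 + y n ^ 2) ≤ N * (L ^ 2 / 2) := hsum_le.trans_eq hconstsum
    _ = L ^ 2 / 2 * N := by ring
  have hab_le : a + b ≤ L ^ 2 / 2 := by
    rw [key]; nlinarith [sq_nonneg (mean x), sq_nonneg (mean y)]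
  -- positivity of denominators
  have hA : 0 < a - c ^ 2 / b := by
    have : c ^ 2 / b < a := (div_lt_iff₀ hvy).mpr hvc
    linarith
  have hB : 0 < b - c ^ 2 / a := by
    have : c ^ 2 / a < b := (div_lt_iff₀ hvx).mpr (by nlinarith)
    linarith
  have hcb : 0 ≤ c ^ 2 / b := by positivity
  have hca : 0 ≤ c ^ 2 / a := by positivity
  have h1 : 1 / a ≤ 1 / (a - c ^ 2 / b) := one_div_le_one_div_of_le hA (by linarith)
  have h2 : 1 / b ≤ 1 / (b - c ^ 2 / a) := one_div_le_one_div_of_le hB (by linarith)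
  have hab_pos : 0 < a + b := by linarith
  have hAMHM : 4 / (a + b) ≤ 1 / a + 1 / b := by
    rw [div_add_div _ _ hvx.ne' hvy.ne', div_le_div_iff₀ hab_pos (by positivity)]
    nlinarith [sq_nonneg (a - b)]
  have hL4 : 8 / L ^ 2 ≤ 4 / (a + b) := by
    rw [div_le_div_iff₀ (by positivity) hab_pos]
    nlinarith
  refine ⟨by linarith, ?_, ?_⟩
  · -- forward direction of equality
    intro heq
    have e3 : 1 / a = 1 / (a - c ^ 2 / b) := by linarith
    have hc0 : c = 0 := by
      by_contra hcne
      have hcpos : 0 < c ^ 2 / b := by positivity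
      have := one_div_lt_one_div_of_lt hA (by linarith : a - c ^ 2 / b < a)
      linarith
    have hceq : c ^ 2 / b = 0 := by rw [hc0]; simp
    have hceq' : c ^ 2 / a = 0 := by rw [hc0]; simp
    rw [hceq, hceq', sub_zero, sub_zero] at heq
    have habL : a + b = L ^ 2 / 2 := by
      have e1 : 4 / (a + b) = 8 / L ^ 2 := by linarith
      rw [div_eq_div_iff hab_pos.ne' (by positivity)] at e1
      linarith
    have haeb : a = b := by
      have e2 : 4 / (a + b) = 1 / a + 1 / b := by linarith
      rw [div_add_div _ _ hvx.ne' hvy.ne',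
        div_eq_div_iff hab_pos.ne' (by positivity)] at e2
      nlinarith [sq_nonneg (a - b)]
    have hSval : (∑ n, (x n ^ 2 + y n ^ 2)) / N
        = L ^ 2 / 2 + mean x ^ 2 + mean y ^ 2 := by
      rw [← habL, key]; ring
    have hmx : mean x = 0 := by
      have := sq_nonneg (mean x); have := sq_nonneg (mean y)
      have hx2 : mean x ^ 2 = 0 := by linarith [hSval.symm.trans_le hS_le, hSval]
      exact pow_eq_zero_iff (n := 2) (by norm_num) |>.mp hx2
    have hmy : mean y = 0 := by
      have := sq_nonneg (mean x); have := sq_nonneg (mean y)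
      have hy2 : mean y ^ 2 = 0 := by linarith [hSval.symm.trans_le hS_le, hSval]
      exact pow_eq_zero_iff (n := 2) (by norm_num) |>.mp hy2
    have hSeq : ∑ n, (x n ^ 2 + y n ^ 2) = ∑ _n : Fin N, L ^ 2 / 2 := by
      rw [hconstsum]
      have : (∑ n, (x n ^ 2 + y n ^ 2)) / N = L ^ 2 / 2 := by
        rw [hSval, hmx, hmy]; ring
      field_simp at this
      linarith
    have hbox_eq := (Finset.sum_eq_sum_iff_of_le (fun n _ => hbox n)).mp hSeq
    exact ⟨hc0, haeb, hmx, hmy, fun n => hbox_eq n (Finset.mem_univ n)⟩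
  · -- backward
    rintro ⟨hc0, haeb, hmx, hmy, hboxeq⟩
    have hSeq : ∑ n, (x n ^ 2 + y n ^ 2) = N * (L ^ 2 / 2) := by
      rw [Finset.sum_congr rfl (fun n _ => hboxeq n), hconstsum]
    have habL : a + b = L ^ 2 / 2 := by
      rw [key, hSeq, hmx, hmy]
      field_simp; ring
    have haval : a = L ^ 2 / 4 := by rw [haeb] at habL ⊢; linarith
    have hbval : b = L ^ 2 / 4 := by rw [← haeb]; exact haval
    rw [hc0, haval, hbval]
    norm_num
    rw [← add_div, div_eq_div_iff (by positivity) (by positivity)]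
    ring
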